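/- For any commutative ring R, any N ∈ ℕ, and any integers α, β ≥ 0, the Schur polynomial of the hook partition (α | β) = (α+1, 1^β) satisfies in MvPolynomial (Fin N) R: s_{(α|β)} = Σ_{m=0}^{β} (−1)^m h_{α+m+1} · e_{β−m}. -/

import Mathlib

open MvPolynomial

/-- The complete homogeneous symmetric polynomial `h_k` in `N` variables, indexed by an
integer `k`, with `h_k = 0` for `k < 0` and `h_0 = 1`. -/
noncomputable def hInt (R : Type*) [CommRing R] (N : ℕ) (k : ℤ) : MvPolynomial (Fin N) R :=
  if 0 ≤ k then hsymm (Fin N) R k.toNat else 0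

/-- The Jacobi–Trudi Schur polynomial `s_λ = det_{1≤i,j≤L} (h_{λ_i - i + j})` in `N`
variables (0-indexed parts `lam 0 ≥ lam 1 ≥ …`, determinant of size `L`). -/
noncomputable def jtSchur (R : Type*) [CommRing R] (N : ℕ) (lam : ℕ → ℕ) (L : ℕ) :
    MvPolynomial (Fin N) R :=
  Matrix.det (Matrix.of fun i j : Fin L => hInt R N ((lam i : ℤ) + j - i))

/-- The hook partition `(a | b) = (a+1, 1^b)` as a 0-indexed sequence of parts;
it has length `b + 1`. -/
def hookP (a b : ℕ) : ℕ → ℕ := fun i => if i = 0 then a + 1 else if i ≤ b then 1 else 0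


section HookAux

open Finset

variable {σ : Type*} [Fintype σ] [DecidableEq σ] {R : Type*} [CommRing R]



lemma geom_inv (a : MvPolynomial σ R) :
    (1 - PowerSeries.C a * PowerSeries.X) * PowerSeries.mk (fun n => a ^ n) = 1 := by
  ext n
  rcases n with _ | n
  · simp
  · have h : (1 - PowerSeries.C a * PowerSeries.X) *
        PowerSeries.mk (fun n => a ^ n)
        = PowerSeries.mk (fun n => a ^ n)
          - PowerSeries.C a * (PowerSeries.mk (fun n => a ^ n) * PowerSeries.X) := by ring
    rw [h]
    simp [PowerSeries.coeff_succ_mul_X, pow_succ, mul_comm]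

lemma coeff_H (n : ℕ) :
    PowerSeries.coeff n
        (∏ i : σ, PowerSeries.mk fun k => (X i : MvPolynomial σ R) ^ k)
      = hsymm σ R n := by
  rw [PowerSeries.coeff_prod, hsymm]
  refine Finset.sum_bij' (fun l hl => (⟨Finsupp.toMultiset l, ?_⟩ : Sym σ n))
      (fun s _ => Multiset.toFinsupp (s : Multiset σ)) ?_ ?_ ?_ ?_ ?_
  · rw [Finsupp.card_toMultiset]
    have hl' := (Finset.mem_finsuppAntidiag.mp hl).1
    rw [Finsupp.sum_fintype _ _ (fun _ => rfl)]
    exact hl'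
  · intro l hl; exact Finset.mem_univ _
  · intro s hs
    rw [Finset.mem_finsuppAntidiag]
    constructor
    · have hc : univ.sum ⇑(Multiset.toFinsupp (s : Multiset σ))
          = ∑ a, (s : Multiset σ).count a := by
        apply Finset.sum_congr rfl; intro a _; simp
      rw [hc, Multiset.sum_count_eq_card (fun _ _ => Finset.mem_univ _)]
      exact s.2
    · exact Finset.subset_univ _
  · intro l hl; simp
  · intro s hs; apply Subtype.ext; simp
  · intro l hl
    simp only [PowerSeries.coeff_mk]
    have h1 : (Multiset.map X (Finsupp.toMultiset l)).prod = ∏ i, (X i : MvPolynomial σ R) ^ l i := by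
      rw [Finsupp.toMultiset_map, Finsupp.prod_toMultiset,
        Finsupp.prod_mapDomain_index (fun _ => pow_zero _) (fun _ _ _ => pow_add _ _ _),
        Finsupp.prod_pow]
    rw [h1]



lemma coeff_E (s : Finset σ) (n : ℕ) :
    PowerSeries.coeff n
        (∏ i ∈ s, (1 - PowerSeries.C (X i : MvPolynomial σ R) * PowerSeries.X))
      = (-1) ^ n * ∑ t ∈ s.powersetCard n, ∏ i ∈ t, (X i : MvPolynomial σ R) := by
  induction s using Finset.induction generalizing n with
  | empty =>
      rcases n with _ | n
      · simp
      · have : (∅ : Finset σ).powersetCard (n+1) = ∅ := by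
          rw [Finset.powersetCard_eq_empty]
          simp
        simp [this]
  | @insert a s ha ih =>
      rw [Finset.prod_insert ha]
      rcases n with _ | n
      · rw [PowerSeries.coeff_zero_eq_constantCoeff, map_mul]
        simp only [map_sub, map_one, map_mul, PowerSeries.constantCoeff_C,
          PowerSeries.constantCoeff_X, mul_zero, sub_zero, one_mul]
        rw [← PowerSeries.coeff_zero_eq_constantCoeff, ih 0]
        simp [Finset.powersetCard_zero]
      · have hexp : (1 - PowerSeries.C (X a) * PowerSeries.X) *
            (∏ i ∈ s, (1 - PowerSeries.C (X i : MvPolynomial σ R) * PowerSeries.X))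
            = (∏ i ∈ s, (1 - PowerSeries.C (X i : MvPolynomial σ R) * PowerSeries.X))
              - PowerSeries.C (X a) *
                ((∏ i ∈ s, (1 - PowerSeries.C (X i : MvPolynomial σ R) * PowerSeries.X)) *
                  PowerSeries.X) := by ring
        rw [hexp, map_sub, PowerSeries.coeff_C_mul, PowerSeries.coeff_succ_mul_X, ih, ih]
        have hdisj : Disjoint (s.powersetCard (n+1))
            ((s.powersetCard n).image (insert a)) := by
          rw [Finset.disjoint_left]
          intro t ht ht'
          obtain ⟨u, hu, rfl⟩ := Finset.mem_image.mp ht'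
          have := Finset.mem_powersetCard.mp ht
          exact ha (this.1 (Finset.mem_insert_self a u))
        have hinj : ∀ x ∈ s.powersetCard n, ∀ y ∈ s.powersetCard n,
            insert a x = insert a y → x = y := by
          intro x hx y hy hxy
          have hax : a ∉ x := fun h => ha ((Finset.mem_powersetCard.mp hx).1 h)
          have hay : a ∉ y := fun h => ha ((Finset.mem_powersetCard.mp hy).1 h)
          rw [← Finset.erase_insert hax, hxy, Finset.erase_insert hay]
        rw [Finset.powersetCard_succ_insert ha, Finset.sum_union hdisj,
          Finset.sum_image hinj]
        have hins : ∀ t ∈ s.powersetCard n,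
            (∏ i ∈ insert a t, (X i : MvPolynomial σ R)) = X a * ∏ i ∈ t, X i := by
          intro t ht
          exact Finset.prod_insert (fun h => ha ((Finset.mem_powersetCard.mp ht).1 h))
        rw [Finset.sum_congr rfl hins, ← Finset.mul_sum]
        ring
lemma e_h_alternate (n : ℕ) (hn : 1 ≤ n) :
    ∑ k ∈ Finset.range (n + 1),
      (-1 : MvPolynomial σ R) ^ k * esymm σ R k * hsymm σ R (n - k) = 0 := by
  have hEH : (∏ i : σ, (1 - PowerSeries.C (X i : MvPolynomial σ R) * PowerSeries.X)) *
      (∏ i : σ, PowerSeries.mk fun k => (X i : MvPolynomial σ R) ^ k) = 1 := by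
    rw [← Finset.prod_mul_distrib]
    exact Finset.prod_eq_one (fun i _ => geom_inv (X i))
  have h2 := congrArg (PowerSeries.coeff n) hEH
  rw [PowerSeries.coeff_mul, PowerSeries.coeff_one, if_neg (by omega),
    Finset.Nat.sum_antidiagonal_eq_sum_range_succ_mk] at h2
  rw [← h2]
  apply Finset.sum_congr rfl
  intro k _
  rw [coeff_E univ k, coeff_H, esymm, mul_assoc]

lemma esymm_succ_eq (β : ℕ) :
    (esymm σ R (β + 1) : MvPolynomial σ R)
      = ∑ m ∈ Finset.range (β + 1),
          (-1) ^ m * hsymm σ R (m + 1) * esymm σ R (β - m) := by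
  have h := e_h_alternate (σ := σ) (R := R) (β + 1) (by omega)
  rw [Finset.sum_range_succ, Nat.sub_self, hsymm_zero, mul_one] at h
  have h' : (∑ k ∈ Finset.range (β + 1),
      (-1 : MvPolynomial σ R) ^ k * esymm σ R k * hsymm σ R (β + 1 - k))
      = -((-1) ^ (β + 1) * esymm σ R (β + 1)) := by
    exact eq_neg_of_add_eq_zero_left h
  rw [← Finset.sum_range_reflect]
  have hterm : ∀ j ∈ Finset.range (β + 1),
      (-1 : MvPolynomial σ R) ^ (β + 1 - 1 - j) * hsymm σ R ((β + 1 - 1 - j) + 1) *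
          esymm σ R (β - (β + 1 - 1 - j))
        = (-1) ^ β * ((-1) ^ j * esymm σ R j * hsymm σ R (β + 1 - j)) := by
    intro j hj
    have hjβ : j ≤ β := by have := Finset.mem_range.mp hj; omega
    have e1 : β + 1 - 1 - j = β - j := by omega
    have e2 : β - (β - j) = j := by omega
    have e3 : (β - j) + 1 = β + 1 - j := by omega
    have e4 : ((-1 : MvPolynomial σ R)) ^ (β - j) = (-1) ^ β * (-1) ^ j := by
      have : ((-1 : MvPolynomial σ R)) ^ (β + j) = (-1) ^ (β - j) := by
        rw [show β + j = (β - j) + 2 * j by omega, pow_add, pow_mul]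
        simp
      rw [← this, pow_add]
    rw [e1, e2, e3, e4]
    ring
  rw [Finset.sum_congr rfl hterm, ← Finset.mul_sum, h']
  have : ((-1 : MvPolynomial σ R)) ^ β * (-1) ^ (β + 1) = -1 := by
    rw [← pow_add, show β + (β + 1) = 2 * β + 1 by ring, pow_succ, pow_mul]
    simp
  rw [mul_neg, ← mul_assoc, this]
  ring

variable {R : Type*} [CommRing R] {N : ℕ}

lemma jt_base (α : ℕ) : jtSchur R N (hookP α 0) 1 = hsymm (Fin N) R (α + 1) := by
  rw [jtSchur, Matrix.det_fin_one]
  simp [hookP, hInt]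
  intro h
  exact absurd h (by omega)

lemma jt_step (α β : ℕ) :
    jtSchur R N (hookP α (β + 1)) (β + 2)
      = hsymm (Fin N) R (α + 1) * jtSchur R N (hookP 0 β) (β + 1)
        - jtSchur R N (hookP (α + 1) β) (β + 1) := by
  rw [jtSchur, Matrix.det_succ_column_zero, Fin.sum_univ_succ, Fin.sum_univ_succ]
  simp only [Fin.succ_zero_eq_one]
  have hrest : ∑ i : Fin β,
      (-1 : MvPolynomial (Fin N) R) ^ (((i.succ.succ : Fin (β + 2)) : ℕ)) *
        (Matrix.of fun i j : Fin (β + 2) => hInt R N ((hookP α (β + 1) i : ℤ) + j - i))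
          i.succ.succ 0 *
        ((Matrix.of fun i j : Fin (β + 2) =>
          hInt R N ((hookP α (β + 1) i : ℤ) + j - i)).submatrix
            i.succ.succ.succAbove Fin.succ).det = 0 := by
    apply Finset.sum_eq_zero
    intro i _
    have hz : (Matrix.of fun i j : Fin (β + 2) => hInt R N ((hookP α (β + 1) i : ℤ) + j - i))
        i.succ.succ 0 = 0 := by
      rw [Matrix.of_apply, hInt, if_neg]
      have h1 : ((i.succ.succ : Fin (β + 2)) : ℕ) = (i : ℕ) + 2 := by
        simp [Fin.val_succ]
      have h2 : (((0 : Fin (β + 2))) : ℕ) = 0 := rfl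
      rw [h1, h2]
      have h3 : hookP α (β + 1) ((i : ℕ) + 2) ≤ 1 := by
        unfold hookP
        split
        · omega
        · split <;> omega
      push_cast
      omega
    rw [hz]
    ring
  rw [hrest]
  have hM00 : (Matrix.of fun i j : Fin (β + 2) => hInt R N ((hookP α (β + 1) i : ℤ) + j - i))
      0 0 = hsymm (Fin N) R (α + 1) := by
    have harg : ((hookP α (β + 1) ((0 : Fin (β + 2)) : ℕ) : ℤ) + ((0 : Fin (β + 2)) : ℕ)
        - ((0 : Fin (β + 2)) : ℕ)) = (α : ℤ) + 1 := by simp [hookP]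
    rw [Matrix.of_apply, harg, hInt, if_pos (by omega)]
    have ht : ((α : ℤ) + 1).toNat = α + 1 := by omega
    rw [ht]
  have hM10 : (Matrix.of fun i j : Fin (β + 2) => hInt R N ((hookP α (β + 1) i : ℤ) + j - i))
      1 0 = 1 := by
    rw [Matrix.of_apply, hInt, if_pos]
    · have : (((1 : Fin (β + 2)) : ℕ)) = 1 := rfl
      simp [hookP, this]
    · simp [hookP]
  have hsub0 : ((Matrix.of fun i j : Fin (β + 2) =>
      hInt R N ((hookP α (β + 1) i : ℤ) + j - i)).submatrix
        (0 : Fin (β + 2)).succAbove Fin.succ)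
      = Matrix.of fun i j : Fin (β + 1) => hInt R N ((hookP 0 β i : ℤ) + j - i) := by
    ext i j
    rw [Matrix.submatrix_apply, Fin.succAbove_zero, Matrix.of_apply, Matrix.of_apply]
    have h1 : ((i.succ : Fin (β + 2)) : ℕ) = (i : ℕ) + 1 := rfl
    have h2 : ((j.succ : Fin (β + 2)) : ℕ) = (j : ℕ) + 1 := rfl
    rw [h1, h2]
    have h3 : hookP α (β + 1) ((i : ℕ) + 1) = 1 := by
      unfold hookP
      rw [if_neg (by omega), if_pos (by omega)]
    have h4 : hookP 0 β (i : ℕ) = 1 := by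
      unfold hookP
      split
      · rfl
      · rw [if_pos (by omega)]
    rw [h3, h4]
    congr 1
    push_cast
    ring
  have hsub1 : ((Matrix.of fun i j : Fin (β + 2) =>
      hInt R N ((hookP α (β + 1) i : ℤ) + j - i)).submatrix
        (1 : Fin (β + 2)).succAbove Fin.succ)
      = Matrix.of fun i j : Fin (β + 1) => hInt R N ((hookP (α + 1) β i : ℤ) + j - i) := by
    ext i j
    rw [Matrix.submatrix_apply, Matrix.of_apply, Matrix.of_apply]
    have h2 : ((j.succ : Fin (β + 2)) : ℕ) = (j : ℕ) + 1 := rfl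
    induction i using Fin.cases with
    | zero =>
        have h0 : ((1 : Fin (β + 2)).succAbove 0) = 0 := by
          simp [Fin.succAbove]
        rw [h0, h2]
        have h3 : hookP α (β + 1) 0 = α + 1 := rfl
        have h4 : hookP (α + 1) β 0 = α + 2 := rfl
        have h5 : (((0 : Fin (β + 2))) : ℕ) = 0 := rfl
        have h6 : (((0 : Fin (β + 1))) : ℕ) = 0 := rfl
        rw [h5, h6, h3, h4]
        congr 1
        push_cast
        ring
    | succ k =>
        have h0 : ((1 : Fin (β + 2)).succAbove k.succ) = k.succ.succ := by
          apply Fin.succAbove_of_le_castSucc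
          rw [Fin.le_def]
          simp
        rw [h0, h2]
        have hv1 : ((k.succ.succ : Fin (β + 2)) : ℕ) = (k : ℕ) + 2 := rfl
        have hv2 : ((k.succ : Fin (β + 1)) : ℕ) = (k : ℕ) + 1 := rfl
        rw [hv1, hv2]
        have h3 : hookP α (β + 1) ((k : ℕ) + 2) = 1 := by
          unfold hookP
          rw [if_neg (by omega), if_pos (by omega)]
        have h4 : hookP (α + 1) β ((k : ℕ) + 1) = 1 := by
          unfold hookP
          rw [if_neg (by omega), if_pos (by omega)]
        rw [h3, h4]
        congr 1
        push_cast
        ring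
  rw [hM00, hM10, hsub0, hsub1, jtSchur, jtSchur]
  have hv0 : (((0 : Fin (β + 2))) : ℕ) = 0 := rfl
  have hv1 : (((1 : Fin (β + 2))) : ℕ) = 1 := rfl
  rw [hv0, hv1]
  ring

end HookAux

/-- **Hook expansion of the Schur polynomial.**
For the hook partition `(α | β) = (α+1, 1^β)` one has, in `MvPolynomial (Fin N) R`,
`s_(α|β) = Σ_{m=0}^{β} (−1)^m h_{α+m+1} e_{β−m}`. -/
theorem hook_schur_expansion
    {R : Type*} [CommRing R] (N : ℕ) (α β : ℕ) :
    jtSchur R N (hookP α β) (β + 1) =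
      ∑ m ∈ Finset.range (β + 1),
        (-1 : MvPolynomial (Fin N) R) ^ m *
          hsymm (Fin N) R (α + m + 1) * esymm (Fin N) R (β - m) := by
  
  induction β generalizing α with
  | zero =>
      rw [jt_base, Finset.sum_range_one]
      simp
  | succ β ih =>
      rw [jt_step, ih 0, ih (α + 1)]
      have h0 : (∑ m ∈ Finset.range (β + 1),
          (-1 : MvPolynomial (Fin N) R) ^ m * hsymm (Fin N) R (0 + m + 1) *
            esymm (Fin N) R (β - m))
          = esymm (Fin N) R (β + 1) := by
        rw [esymm_succ_eq]
        apply Finset.sum_congr rfl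
        intro m _
        rw [Nat.zero_add]
      rw [h0]
      conv_rhs => rw [Finset.sum_range_succ']
      have hterm : ∀ m ∈ Finset.range (β + 1),
          (-1 : MvPolynomial (Fin N) R) ^ (m + 1) * hsymm (Fin N) R (α + (m + 1) + 1) *
              esymm (Fin N) R (β + 1 - (m + 1))
            = -((-1) ^ m * hsymm (Fin N) R (α + 1 + m + 1) * esymm (Fin N) R (β - m)) := by
        intro m _
        have e1 : β + 1 - (m + 1) = β - m := by omega
        have e2 : α + (m + 1) + 1 = α + 1 + m + 1 := by omega
        rw [e1, e2, pow_succ]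
        ring
      rw [Finset.sum_congr rfl hterm, Finset.sum_neg_distrib]
      simp only [Nat.add_zero, Nat.sub_zero, pow_zero, one_mul]
      ring
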